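/- Let X : [0,T] → ℝ^d be a C^1 path and l ≥ 1 an integer. Then for every 0 ≤ s ≤ t ≤ T and every partition s = t_0 < t_1 < ⋯ < t_n = t, Σ_{i=0}^{n−1} ‖X^{l}_{t_i,t_{i+1}}‖^{1/l} ≤ (1/l!)^{1/l} · ∫_s^t |X'(u)| du. -/

import Mathlib

open MeasureTheory

noncomputable section

/-- The `k`-th tensor power of `ℝ^d`, identified with `ℝ^(d^k)` with the Euclidean norm. -/
abbrev Tpow (d k : ℕ) : Type := EuclideanSpace ℝ (Fin k → Fin d)

/-- Tensor product of tensor-power vectors. -/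
def tmul {d k l : ℕ} (v : Tpow d k) (w : Tpow d l) : Tpow d (k + l) :=
  WithLp.toLp 2 fun i => v (fun j => i (Fin.castAdd l j)) * w (fun j => i (Fin.natAdd k j))

/-- Reindexing cast between tensor powers of equal order. -/
def tcast {d k l : ℕ} (h : k = l) (v : Tpow d k) : Tpow d l :=
  WithLp.toLp 2 fun i => v (fun j => i (Fin.cast h j))

/-- Tensor product `a ⊗ w` of a vector of `ℝ^d` with a `k`-tensor. -/
def consT {d k : ℕ} (a : EuclideanSpace ℝ (Fin d)) (w : Tpow d k) : Tpow d (k + 1) :=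
  WithLp.toLp 2 fun i => a (i 0) * w (fun j => i j.succ)

/-- Iterated integrals `X^k_{s,t} = ∫_{s<s₁<⋯<s_k<t} X'(s₁) ⊗ ⋯ ⊗ X'(s_k) ds₁⋯ds_k`
of a C¹ path, defined recursively: `X^{k+1}_{s,t} = ∫_s^t X^k_{s,u} ⊗ X'(u) du`. -/
def iterInt {d : ℕ} (X : ℝ → EuclideanSpace ℝ (Fin d)) : (k : ℕ) → ℝ → ℝ → Tpow d k
  | 0, _, _ => WithLp.toLp 2 fun _ => 1
  | (k+1), s, t => WithLp.toLp 2 fun i =>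
      ∫ u in s..t, iterInt X k s u (fun j => i j.castSucc) * deriv X u (i (Fin.last k))

/-- `w ⊗ v`, appending one vector factor on the right. -/
def mulT {d k : ℕ} (w : Tpow d k) (v : EuclideanSpace ℝ (Fin d)) : Tpow d (k + 1) :=
  WithLp.toLp 2 fun i => w (fun j => i j.castSucc) * v (i (Fin.last k))

def snocEquiv (d k : ℕ) : ((Fin k → Fin d) × Fin d) ≃ (Fin (k + 1) → Fin d) where
  toFun p := Fin.snoc p.1 p.2
  invFun i := (fun j => i j.castSucc, i (Fin.last k))
  left_inv p := by ext <;> simp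
  right_inv i := Fin.snoc_init_self i

lemma snocEquiv_apply {d k : ℕ} (p : (Fin k → Fin d) × Fin d) :
    snocEquiv d k p = Fin.snoc p.1 p.2 := rfl

lemma sum_snoc_mul {d k : ℕ} (f : (Fin k → Fin d) → ℝ) (g : Fin d → ℝ) :
    ∑ i : Fin (k + 1) → Fin d, f (fun j => i j.castSucc) * g (i (Fin.last k))
      = (∑ p, f p) * (∑ j, g j) := by
  rw [← Equiv.sum_comp (snocEquiv d k)]
  simp only [snocEquiv_apply, Fin.snoc_castSucc, Fin.snoc_last]
  rw [Fintype.sum_prod_type, ← Finset.sum_mul_sum]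

lemma norm_mulT {d k : ℕ} (w : Tpow d k) (v : EuclideanSpace ℝ (Fin d)) :
    ‖mulT w v‖ = ‖w‖ * ‖v‖ := by
  rw [EuclideanSpace.norm_eq, EuclideanSpace.norm_eq, EuclideanSpace.norm_eq,
    ← Real.sqrt_mul (by positivity)]
  congr 1
  rw [← sum_snoc_mul (fun p => ‖w p‖ ^ 2) (fun j => ‖v j‖ ^ 2)]
  congr 1 with i
  rw [mulT, norm_mul, mul_pow]

lemma norm_iterInt_zero {d : ℕ} (X : ℝ → EuclideanSpace ℝ (Fin d)) (a b : ℝ) :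
    ‖iterInt X 0 a b‖ = 1 := by
  rw [EuclideanSpace.norm_eq]
  simp [iterInt]

variable {d : ℕ} {X : ℝ → EuclideanSpace ℝ (Fin d)}

lemma continuous_iterInt_comp (hX : ContDiff ℝ 1 X) (k : ℕ) (a : ℝ) (i : Fin k → Fin d) :
    Continuous fun u => iterInt X k a u i := by
  induction k with
  | zero => simpa [iterInt] using continuous_const
  | succ k ih =>
      have hH : Continuous fun u =>
          iterInt X k a u (fun j => i j.castSucc) * deriv X u (i (Fin.last k)) :=
        (ih _).mul (((EuclideanSpace.proj (𝕜 := ℝ) (i (Fin.last k))).continuous).comp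
          (hX.continuous_deriv le_rfl))
      have : ∀ b : ℝ, ContinuousAt (fun u => iterInt X (k + 1) a u i) b := by
        intro b
        have := (hH.integral_hasStrictDerivAt a b).hasDerivAt.continuousAt
        simpa [iterInt] using this
      exact continuous_iff_continuousAt.mpr this

lemma continuous_mulT_int (hX : ContDiff ℝ 1 X) (k : ℕ) (a : ℝ) :
    Continuous fun u => mulT (iterInt X k a u) (deriv X u) := by
  have : Continuous fun u => (fun i : Fin (k + 1) → Fin d =>
      iterInt X k a u (fun j => i j.castSucc) * deriv X u (i (Fin.last k))) :=
    continuous_pi fun i => (continuous_iterInt_comp hX k a _).mul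
      (((EuclideanSpace.proj (𝕜 := ℝ) (i (Fin.last k))).continuous).comp
        (hX.continuous_deriv le_rfl))
  exact (PiLp.continuous_toLp 2 fun _ : Fin (k + 1) → Fin d => ℝ).comp this

lemma iterInt_succ_eq (hX : ContDiff ℝ 1 X) (k : ℕ) (a b : ℝ) :
    iterInt X (k + 1) a b = ∫ u in a..b, mulT (iterInt X k a u) (deriv X u) := by
  have hFint : IntervalIntegrable (fun u => mulT (iterInt X k a u) (deriv X u))
      volume a b := (continuous_mulT_int hX k a).intervalIntegrable a b
  ext i
  calc iterInt X (k + 1) a b i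
      = ∫ u in a..b, (EuclideanSpace.proj (𝕜 := ℝ) i)
          (mulT (iterInt X k a u) (deriv X u)) := by
        simp only [iterInt]; rfl
    _ = (EuclideanSpace.proj (𝕜 := ℝ) i)
          (∫ u in a..b, mulT (iterInt X k a u) (deriv X u)) :=
        ContinuousLinearMap.intervalIntegral_comp_comm _ hFint
    _ = (∫ u in a..b, mulT (iterInt X k a u) (deriv X u)) i := rfl

lemma norm_iterInt_le (hX : ContDiff ℝ 1 X) :
    ∀ (k : ℕ) (a b : ℝ), a ≤ b →
      ‖iterInt X k a b‖ ≤ (∫ u in a..b, ‖deriv X u‖) ^ k / (Nat.factorial k : ℝ) := by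
  intro k
  induction k with
  | zero => intro a b _; simp [norm_iterInt_zero]
  | succ k ih =>
      intro a b hab
      have hφ : Continuous fun u => ‖deriv X u‖ := (hX.continuous_deriv le_rfl).norm
      set g : ℝ → ℝ := fun u => ∫ v in a..u, ‖deriv X v‖ with hgdef
      have hg : ∀ u, HasDerivAt g ‖deriv X u‖ u := fun u =>
        (hφ.integral_hasStrictDerivAt a u).hasDerivAt
      have hgc : Continuous g := continuous_iff_continuousAt.mpr fun u =>
        (hg u).continuousAt
      have hgnn : ∀ u ∈ Set.Icc a b, 0 ≤ g u := fun u hu =>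
        intervalIntegral.integral_nonneg hu.1 fun _ _ => norm_nonneg _
      have hfac : (0 : ℝ) < (Nat.factorial k : ℝ) := by positivity
      -- pointwise bound on the norm of the integrand
      have hbd : ∀ u ∈ Set.Icc a b,
          ‖mulT (iterInt X k a u) (deriv X u)‖ ≤ g u ^ k / (Nat.factorial k : ℝ) * ‖deriv X u‖ := by
        intro u hu
        rw [norm_mulT]
        exact mul_le_mul_of_nonneg_right (ih a u hu.1) (norm_nonneg _)
      -- derivative of the primitive G
      have hG : ∀ u, HasDerivAt (fun x => g x ^ (k + 1) / (Nat.factorial (k + 1) : ℝ))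
          (g u ^ k / (Nat.factorial k : ℝ) * ‖deriv X u‖) u := by
        intro u
        have h2 := ((hg u).pow (k + 1)).div_const (Nat.factorial (k + 1) : ℝ)
        refine h2.congr_deriv ?_
        rw [Nat.factorial_succ, Nat.add_sub_cancel]
        push_cast
        field_simp
      have hint2 : Continuous fun u => g u ^ k / (Nat.factorial k : ℝ) * ‖deriv X u‖ :=
        ((hgc.pow k).div_const _).mul hφ
      have key : (∫ u in a..b, g u ^ k / (Nat.factorial k : ℝ) * ‖deriv X u‖)
          = g b ^ (k + 1) / (Nat.factorial (k + 1) : ℝ) := by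
        have := intervalIntegral.integral_eq_sub_of_hasDerivAt
          (f := fun x => g x ^ (k + 1) / (Nat.factorial (k + 1) : ℝ))
          (fun u _ => hG u) (hint2.intervalIntegrable a b)
        rw [this]
        have hga : g a = 0 := intervalIntegral.integral_same
        simp [hga]
      calc ‖iterInt X (k + 1) a b‖
          = ‖∫ u in a..b, mulT (iterInt X k a u) (deriv X u)‖ := by
            rw [iterInt_succ_eq hX]
        _ ≤ ∫ u in a..b, ‖mulT (iterInt X k a u) (deriv X u)‖ :=
            intervalIntegral.norm_integral_le_integral_norm hab
        _ ≤ ∫ u in a..b, g u ^ k / (Nat.factorial k : ℝ) * ‖deriv X u‖ := by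
            apply intervalIntegral.integral_mono_on hab
              ((continuous_mulT_int hX k a).norm.intervalIntegrable a b)
              (hint2.intervalIntegrable a b) hbd
        _ = g b ^ (k + 1) / (Nat.factorial (k + 1) : ℝ) := key


/-- For a C¹ path `X`, an integer `l ≥ 1`, `0 ≤ s ≤ t ≤ T`, and any
partition `s = t₀ < t₁ < ⋯ < t_n = t`:
`Σ_{i=0}^{n−1} ‖X^l_{t_i,t_{i+1}}‖^{1/l} ≤ (1/l!)^{1/l} ∫_s^t |X'(u)| du`. -/
theorem iterated_integral_variation_bound {d : ℕ} (T : ℝ)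
    (X : ℝ → EuclideanSpace ℝ (Fin d)) (hX : ContDiff ℝ 1 X)
    (l : ℕ) (hl : 1 ≤ l) (s t : ℝ) (hs : 0 ≤ s) (hst : s ≤ t) (htT : t ≤ T)
    (n : ℕ) (hn : 1 ≤ n) (τ : ℕ → ℝ)
    (hτ0 : τ 0 = s) (hτn : τ n = t) (hmono : ∀ i, i < n → τ i < τ (i + 1)) :
    ∑ i ∈ Finset.range n, ‖iterInt X l (τ i) (τ (i + 1))‖ ^ (1 / (l : ℝ))
      ≤ (1 / (Nat.factorial l : ℝ)) ^ (1 / (l : ℝ)) * ∫ u in s..t, ‖deriv X u‖ := by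
  have hφ : Continuous fun u => ‖deriv X u‖ := (hX.continuous_deriv le_rfl).norm
  have hlR : (l : ℝ) ≠ 0 := Nat.cast_ne_zero.mpr (by omega)
  have key : ∀ i ∈ Finset.range n, ‖iterInt X l (τ i) (τ (i + 1))‖ ^ (1 / (l : ℝ))
      ≤ (1 / (Nat.factorial l : ℝ)) ^ (1 / (l : ℝ)) * ∫ u in τ i..τ (i + 1), ‖deriv X u‖ := by
    intro i hi
    have hab : τ i ≤ τ (i + 1) := (hmono i (Finset.mem_range.mp hi)).le
    have h1 := norm_iterInt_le hX l (τ i) (τ (i + 1)) hab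
    set G := ∫ u in τ i..τ (i + 1), ‖deriv X u‖ with hG
    have hGnn : 0 ≤ G := intervalIntegral.integral_nonneg hab fun u _ => norm_nonneg _
    have h2 : ‖iterInt X l (τ i) (τ (i + 1))‖ ^ (1 / (l : ℝ))
        ≤ (G ^ l / (Nat.factorial l : ℝ)) ^ (1 / (l : ℝ)) :=
      Real.rpow_le_rpow (norm_nonneg _) h1 (by positivity)
    refine h2.trans_eq ?_
    rw [div_eq_mul_one_div, Real.mul_rpow (by positivity) (by positivity), mul_comm]
    congr 1
    rw [← Real.rpow_natCast G l, ← Real.rpow_mul hGnn, mul_one_div, div_self hlR,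
      Real.rpow_one]
  calc ∑ i ∈ Finset.range n, ‖iterInt X l (τ i) (τ (i + 1))‖ ^ (1 / (l : ℝ))
      ≤ ∑ i ∈ Finset.range n, (1 / (Nat.factorial l : ℝ)) ^ (1 / (l : ℝ))
          * ∫ u in τ i..τ (i + 1), ‖deriv X u‖ := Finset.sum_le_sum key
    _ = (1 / (Nat.factorial l : ℝ)) ^ (1 / (l : ℝ))
          * ∑ i ∈ Finset.range n, ∫ u in τ i..τ (i + 1), ‖deriv X u‖ := by
        rw [Finset.mul_sum]
    _ = (1 / (Nat.factorial l : ℝ)) ^ (1 / (l : ℝ)) * ∫ u in s..t, ‖deriv X u‖ := by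
        congr 1
        rw [intervalIntegral.sum_integral_adjacent_intervals
          (fun k _ => hφ.intervalIntegrable _ _), hτ0, hτn]

end
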